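/- Let H0, H1, H2 be complex Hilbert spaces, let R : H0 → H1 and T : H1 → H2 be densely defined closed linear operators such that ker T ⊆ range R, and suppose there is a constant C > 0 such that for every ψ ∈ H2 there exists φ ∈ dom T with T φ = ψ and ‖φ‖ ≤ C ‖ψ‖. If f ∈ H1 satisfies ⟨f, R h⟩ = 0 for all h ∈ dom R, then there exists u ∈ dom T† with T† u = f and ‖u‖ ≤ C ‖f‖. (This abstracts the full scheme of the proof of Proposition 3.4: the exactness ker T ⊆ range R together with the Stokes-type vanishing ⟨f, R h⟩ = 0 makes the functional T_f well-defined on the range of T, and the Riesz representation theorem then produces the solution u of the adjoint equation.) -/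
import Mathlib


open scoped ComplexInnerProductSpace

/-- Let `R : H0 → H1` and `T : H1 → H2` be densely defined closed
operators with `ker T ⊆ range R`, and suppose there is `C > 0` such that every
`ψ ∈ H2` can be written `ψ = T φ` with `‖φ‖ ≤ C ‖ψ‖`. If `f ∈ H1` satisfies
`⟪f, R h⟫ = 0` for all `h ∈ dom R`, then `f = T† u` for some `u ∈ dom T†` with
`‖u‖ ≤ C ‖f‖`. -/
theorem adjoint_solvability_of_exactness_and_orthogonality
    {H0 H1 H2 : Type*}
    [NormedAddCommGroup H0] [InnerProductSpace ℂ H0] [CompleteSpace H0]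
    [NormedAddCommGroup H1] [InnerProductSpace ℂ H1] [CompleteSpace H1]
    [NormedAddCommGroup H2] [InnerProductSpace ℂ H2] [CompleteSpace H2]
    (R : H0 →ₗ.[ℂ] H1) (T : H1 →ₗ.[ℂ] H2)
    (hRdense : Dense (R.domain : Set H0)) (hRclosed : R.IsClosed)
    (hTdense : Dense (T.domain : Set H1)) (hTclosed : T.IsClosed)
    (hker : ∀ φ : T.domain, T φ = 0 → ∃ h : R.domain, R h = (φ : H1))
    (C : ℝ) (hC : 0 < C)
    (hsolv : ∀ ψ : H2, ∃ φ : T.domain, T φ = ψ ∧ ‖(φ : H1)‖ ≤ C * ‖ψ‖)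
    (f : H1) (hf : ∀ h : R.domain, ⟪f, R h⟫ = 0) :
    ∃ (u : H2) (hu : u ∈ T.adjoint.domain),
      T.adjoint ⟨u, hu⟩ = f ∧ ‖u‖ ≤ C * ‖f‖ := by
  classical
  -- Key: the value ⟪f, φ⟫ only depends on T φ.
  have key : ∀ φ φ' : T.domain, T φ = T φ' → ⟪f, ((φ : H1))⟫ = ⟪f, ((φ' : H1))⟫ := by
    intro φ φ' hφφ'
    have h0 : T (φ - φ') = 0 := by rw [T.map_sub, hφφ', sub_self]
    obtain ⟨h, hh⟩ := hker (φ - φ') h0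
    have h2 : ⟪f, ((φ : H1) - (φ' : H1))⟫ = 0 := by
      have : ((φ : H1) - (φ' : H1)) = R h := by rw [hh]; rfl
      rw [this]; exact hf h
    rw [inner_sub_right, sub_eq_zero] at h2
    exact h2
  -- choose a bounded right inverse of T
  set g : H2 → T.domain := fun ψ => (hsolv ψ).choose with hg
  have hgT : ∀ ψ, T (g ψ) = ψ := fun ψ => (hsolv ψ).choose_spec.1
  have hgn : ∀ ψ, ‖((g ψ : H1))‖ ≤ C * ‖ψ‖ := fun ψ => (hsolv ψ).choose_spec.2
  -- the well-defined linear functional L ψ = ⟪f, φ⟫ whenever T φ = ψ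
  have keyg : ∀ (φ : T.domain), ⟪f, ((g (T φ) : H1))⟫ = ⟪f, ((φ : H1))⟫ :=
    fun φ => key _ _ (hgT (T φ))
  let L : H2 →ₗ[ℂ] ℂ :=
    { toFun := fun ψ => ⟪f, ((g ψ : H1))⟫
      map_add' := by
        intro ψ ψ'
        have h1 : T (g ψ + g ψ') = ψ + ψ' := by rw [T.map_add, hgT, hgT]
        show ⟪f, ((g (ψ + ψ') : H1))⟫ = ⟪f, ((g ψ : H1))⟫ + ⟪f, ((g ψ' : H1))⟫
        rw [key (g (ψ + ψ')) (g ψ + g ψ') (by rw [hgT, h1])]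
        have : ((g ψ + g ψ' : T.domain) : H1) = (g ψ : H1) + (g ψ' : H1) := rfl
        rw [this, inner_add_right]
      map_smul' := by
        intro c ψ
        have h1 : T (c • g ψ) = c • ψ := by rw [T.map_smul, hgT]
        show ⟪f, ((g (c • ψ) : H1))⟫ = (RingHom.id ℂ) c • ⟪f, ((g ψ : H1))⟫
        rw [key (g (c • ψ)) (c • g ψ) (by rw [hgT, h1])]
        have : ((c • g ψ : T.domain) : H1) = c • (g ψ : H1) := rfl
        rw [this, inner_smul_right]
        rfl }
  have hLbound : ∀ ψ, ‖L ψ‖ ≤ (C * ‖f‖) * ‖ψ‖ := by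
    intro ψ
    calc ‖L ψ‖ = ‖⟪f, ((g ψ : H1))⟫‖ := rfl
      _ ≤ ‖f‖ * ‖(g ψ : H1)‖ := norm_inner_le_norm _ _
      _ ≤ ‖f‖ * (C * ‖ψ‖) := by
          gcongr
          exact hgn ψ
      _ = (C * ‖f‖) * ‖ψ‖ := by ring
  let L' : H2 →L[ℂ] ℂ := L.mkContinuous (C * ‖f‖) hLbound
  have hL'norm : ‖L'‖ ≤ C * ‖f‖ :=
    L.mkContinuous_norm_le (by positivity) hLbound
  set u : H2 := (InnerProductSpace.toDual ℂ H2).symm L' with hu_def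
  have hu_inner : ∀ ψ : H2, ⟪u, ψ⟫ = L' ψ := fun ψ =>
    InnerProductSpace.toDual_symm_apply
  have hu_norm : ‖u‖ ≤ C * ‖f‖ := by
    rw [hu_def]
    rw [LinearIsometryEquiv.norm_map]
    exact hL'norm
  -- the adjoint relation
  have hrel : ∀ x : T.domain, ⟪f, (x : H1)⟫ = ⟪u, T x⟫ := by
    intro x
    rw [hu_inner]
    exact (keyg x).symm
  have hu_mem : u ∈ T.adjoint.domain :=
    LinearPMap.mem_adjoint_domain_of_exists u ⟨f, hrel⟩
  refine ⟨u, hu_mem, ?_, hu_norm⟩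
  exact LinearPMap.adjoint_apply_eq hTdense ⟨u, hu_mem⟩ fun x => by simpa using hrel x
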